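/- arXiv:2603.27743 — 2 statements merged into one kernel-verified Lean document; each statement's English description precedes it below -/
import Mathlib

section
/- Let $\theta_0 \in \mathbb{R}^J$ with optimal set $J_0 = \arg\max_j \theta_{0j}$ satisfying $|J_0| \ge 2$, and gap $\Delta_0 = \min_{k\notin J_0}(\tau_0 - \theta_{0k}) > 0$ (or $+\infty$ if $J_0$ is everything). Then the set $C = \{v \in \mathbb{R}^J : \max_{j\in J_0} v_j = 0\}$ is a closed cone (closed under multiplication by nonnegative scalars) containing the origin, and for every $M$ and all sufficiently small $t > 0$, $L_t \cap B_M = C \cap B_M$. -/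
open Matrix BigOperators Finset

lemma coord_abs_le_norm {J : ℕ} (v : EuclideanSpace ℝ (Fin J)) (j : Fin J) :
    |v j| ≤ ‖v‖ := by
  rw [EuclideanSpace.norm_eq]
  have h1 : |v j| = Real.sqrt (‖v j‖ ^ 2) := by
    rw [Real.sqrt_sq_eq_abs, abs_norm, Real.norm_eq_abs]
  rw [h1]
  apply Real.sqrt_le_sqrt
  exact Finset.single_le_sum (f := fun i => ‖v i‖ ^ 2)
    (fun i _ => sq_nonneg _) (Finset.mem_univ j)

lemma sup'_mul_nonneg {α : Type*} (s : Finset α) (hs : s.Nonempty) (c : ℝ) (hc : 0 ≤ c)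
    (f : α → ℝ) : s.sup' hs (fun j => c * f j) = c * s.sup' hs f := by
  apply le_antisymm
  · exact Finset.sup'_le _ _ fun j hj =>
      mul_le_mul_of_nonneg_left (Finset.le_sup' f hj) hc
  · obtain ⟨j, hj, hje⟩ := Finset.exists_mem_eq_sup' hs f
    rw [hje]
    exact Finset.le_sup' (fun j => c * f j) hj

/-- At a tie (`|J₀| ≥ 2`), the set `C = {v : max_{j∈J₀} v_j = 0}` is a closed
cone containing the origin, and the truncated level sets of the max functional
coincide with `C` inside any ball for all sufficiently small `t > 0`. -/
theorem stmt6 (J : ℕ) [NeZero J] (θ0 : EuclideanSpace ℝ (Fin J))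
    (τ0 : ℝ) (hτ : τ0 = Finset.univ.sup' Finset.univ_nonempty θ0)
    (J0 : Finset (Fin J)) (hJ0 : J0 = Finset.univ.filter (fun j => θ0 j = τ0))
    (hJ0ne : J0.Nonempty) (htie : 2 ≤ J0.card)
    (Δ0 : ℝ) (hΔpos : 0 < Δ0)
    (hgap : ∀ k, k ∉ J0 → Δ0 ≤ τ0 - θ0 k)
    (L : ℝ → Set (EuclideanSpace ℝ (Fin J)))
    (hL : ∀ t, L t = {v | Finset.univ.sup' Finset.univ_nonempty
        (fun j => θ0 j + t * v j) = τ0})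
    (C : Set (EuclideanSpace ℝ (Fin J)))
    (hC : C = {v | J0.sup' hJ0ne (fun j => v j) = 0}) :
    IsClosed C ∧ (∀ c : ℝ, 0 ≤ c → ∀ v ∈ C, c • v ∈ C) ∧ (0 : EuclideanSpace ℝ (Fin J)) ∈ C ∧
    ∀ M : ℝ, 0 < M → ∃ t0 > 0, ∀ t, 0 < t → t < t0 →
      L t ∩ Metric.closedBall 0 M = C ∩ Metric.closedBall 0 M := by
  have hmemJ0 : ∀ j ∈ J0, θ0 j = τ0 := by
    intro j hj
    rw [hJ0] at hj
    exact (Finset.mem_filter.mp hj).2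
  refine ⟨?_, ?_, ?_, ?_⟩
  · -- closed
    have hf : Continuous (fun v : EuclideanSpace ℝ (Fin J) => J0.sup' hJ0ne (fun j => v j)) :=
      Continuous.finset_sup'_apply hJ0ne fun i _ => (EuclideanSpace.proj i).continuous
    have : C = (fun v : EuclideanSpace ℝ (Fin J) => J0.sup' hJ0ne (fun j => v j)) ⁻¹' {0} := by
      rw [hC]; rfl
    rw [this]
    exact IsClosed.preimage hf isClosed_singleton
  · -- cone
    intro c hc v hv
    rw [hC] at hv ⊢
    simp only [Set.mem_setOf_eq] at hv ⊢
    have hsmul : ∀ j, (c • v) j = c * v j := fun j => rfl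
    calc J0.sup' hJ0ne (fun j => (c • v) j) = J0.sup' hJ0ne (fun j => c * v j) := by
          exact Finset.sup'_congr hJ0ne rfl fun j _ => hsmul j
      _ = c * J0.sup' hJ0ne (fun j => v j) := sup'_mul_nonneg _ _ c hc _
      _ = 0 := by rw [hv, mul_zero]
  · -- 0 ∈ C
    rw [hC]
    simp only [Set.mem_setOf_eq]
    have : ∀ j ∈ J0, (0 : EuclideanSpace ℝ (Fin J)) j = (0 : ℝ) := fun j _ => rfl
    rw [Finset.sup'_congr hJ0ne rfl this, Finset.sup'_const]
  · -- main
    intro M hM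
    refine ⟨Δ0 / M, div_pos hΔpos hM, fun t ht htlt => ?_⟩
    have htM : t * M < Δ0 := by
      rw [lt_div_iff₀ hM] at htlt; linarith
    ext v
    simp only [Set.mem_inter_iff, Metric.mem_closedBall, dist_zero_right, hL, hC,
      Set.mem_setOf_eq]
    constructor
    · rintro ⟨hsup, hnorm⟩
      refine ⟨?_, hnorm⟩
      have hbound : ∀ j, t * v j ≤ t * M := fun j =>
        mul_le_mul_of_nonneg_left
          (le_trans (le_abs_self _) (le_trans (coord_abs_le_norm v j) hnorm)) ht.le
      apply le_antisymm
      · apply Finset.sup'_le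
        intro j hj
        have h1 : θ0 j + t * v j ≤ τ0 := hsup ▸ Finset.le_sup' (fun j => θ0 j + t * v j) (Finset.mem_univ j)
        have h2 := hmemJ0 j hj
        nlinarith
      · obtain ⟨j, hj, hje⟩ := Finset.exists_mem_eq_sup' Finset.univ_nonempty
          (fun j => θ0 j + t * v j)
        rw [hje] at hsup
        have hjJ0 : j ∈ J0 := by
          by_contra hjn
          have := hgap j hjn
          have := hbound j
          linarith
        have h2 := hmemJ0 j hjJ0
        have hvj : v j = 0 := by nlinarith
        calc (0 : ℝ) = v j := hvj.symm
          _ ≤ _ := Finset.le_sup' _ hjJ0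
    · rintro ⟨hsup, hnorm⟩
      refine ⟨?_, hnorm⟩
      have hbound : ∀ j, t * v j ≤ t * M := fun j =>
        mul_le_mul_of_nonneg_left
          (le_trans (le_abs_self _) (le_trans (coord_abs_le_norm v j) hnorm)) ht.le
      apply le_antisymm
      · apply Finset.sup'_le
        intro j _
        by_cases hj : j ∈ J0
        · have h2 := hmemJ0 j hj
          have h3 : v j ≤ 0 := hsup ▸ Finset.le_sup' (fun j => v j) hj
          nlinarith
        · have := hgap j hj
          have := hbound j
          linarith
      · obtain ⟨j, hj, hje⟩ := Finset.exists_mem_eq_sup' hJ0ne (fun j => v j)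
        have hvj : v j = 0 := by rw [← hje, hsup]
        have h2 := hmemJ0 j hj
        have : θ0 j + t * v j = τ0 := by rw [hvj, h2]; ring
        calc τ0 = θ0 j + t * v j := this.symm
          _ ≤ _ := Finset.le_sup' (fun j => θ0 j + t * v j) (Finset.mem_univ j)
end

section
/- Let $\hat\Sigma \succ 0$, $\bar X \in \mathbb{R}^J$, $c \ge 0$, $n > 0$, and $E = \{m : n(m-\bar X)^\top\hat\Sigma^{-1}(m-\bar X) \le c\}$. Then $\inf_{m \in E} \max_{1\le j\le J} m_j = \max_{w \in \Delta_J} \left\{ w^\top \bar X - \sqrt{c/n}\,\sqrt{w^\top \hat\Sigma w} \right\}$, where $\Delta_J$ is the probability simplex. -/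
/-!
Write `t = √(c/n)` and `f(w) = w ⬝ᵥ X̄ - t √(wᵀ Σ̂ w)`. By Cauchy–Schwarz in the geometry of `Σ̂⁻¹`,
`f(w)` is the minimum of `w ⬝ᵥ m` over the ellipsoid, attained at `m = X̄ - (t / √(wᵀ Σ̂ w)) Σ̂ w`;
since `w ⬝ᵥ m ≤ maxⱼ mⱼ` for `w` in the simplex, `maxⱼ mⱼ ≥ f(w)` for every such `m` and `w`.
For equality take a maximiser `w` of the concave function `f` on the compact simplex. The
derivative of `f` at `w` in the direction `eⱼ - w` is `mⱼ - w ⬝ᵥ m` for the minimising point `m`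
above, so first-order optimality gives `maxⱼ mⱼ = w ⬝ᵥ m = f(w)`: the pair `(m, w)` is a saddle
point.
-/

open Matrix Finset

variable {ι : Type*} [Fintype ι]

namespace Matrix

theorem IsSymm.dotProduct_mulVec_comm {R : Type*} [CommSemiring R] {M : Matrix ι ι R}
    (hM : M.IsSymm) (u v : ι → R) : u ⬝ᵥ M *ᵥ v = v ⬝ᵥ M *ᵥ u := by
  simpa only [hM.eq] using dotProduct_transpose_mulVec M u v

theorem IsSymm.add_smul_dotProduct_mulVec_add_smul {R : Type*} [CommRing R] {M : Matrix ι ι R}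
    (hM : M.IsSymm) (u v : ι → R) (e : R) :
    (u + e • v) ⬝ᵥ M *ᵥ (u + e • v)
      = u ⬝ᵥ M *ᵥ u + 2 * e * (v ⬝ᵥ M *ᵥ u) + e ^ 2 * (v ⬝ᵥ M *ᵥ v) := by
  simp only [mulVec_add, mulVec_smul, add_dotProduct, dotProduct_add, smul_dotProduct,
    dotProduct_smul, smul_eq_mul, hM.dotProduct_mulVec_comm u v]
  ring

theorem PosDef.sq_dotProduct_le [DecidableEq ι] {M : Matrix ι ι ℝ} (hM : M.PosDef)
    (w v : ι → ℝ) : (w ⬝ᵥ v) ^ 2 ≤ (w ⬝ᵥ M *ᵥ w) * (v ⬝ᵥ M⁻¹ *ᵥ v) := by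
  set u := M⁻¹ *ᵥ v
  have hMu : M *ᵥ u = v := by
    rw [mulVec_mulVec, mul_nonsing_inv _ ((isUnit_iff_isUnit_det M).mp hM.isUnit), one_mulVec]
  have hcs := (toBilin' M).apply_mul_apply_le_of_forall_zero_le
    (fun x => by simpa [toBilin'_apply'] using hM.posSemidef.dotProduct_mulVec_nonneg x) w u
  simp only [toBilin'_apply', (isHermitian_iff_isSymm.mp hM.1).dotProduct_mulVec_comm u w,
    hMu] at hcs
  rwa [dotProduct_comm u v, ← sq] at hcs

end Matrix

theorem ne_zero_of_mem_stdSimplex {𝕜 : Type*} [Semiring 𝕜] [PartialOrder 𝕜] [Nontrivial 𝕜]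
    {w : ι → 𝕜} (hw : w ∈ stdSimplex 𝕜 ι) : w ≠ 0 := by
  rintro rfl
  simpa using hw.2

theorem dotProduct_le_sup'_of_mem_stdSimplex [Nonempty ι] {w : ι → ℝ}
    (hw : w ∈ stdSimplex ℝ ι) (m : ι → ℝ) : w ⬝ᵥ m ≤ univ.sup' univ_nonempty m :=
  calc w ⬝ᵥ m ≤ ∑ j, w j * univ.sup' univ_nonempty m :=
        sum_le_sum fun j _ => mul_le_mul_of_nonneg_left (le_sup' m (mem_univ j)) (hw.1 j)
    _ = univ.sup' univ_nonempty m := by rw [← sum_mul, hw.2, one_mul]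

def ellipsoid [DecidableEq ι] (M : Matrix ι ι ℝ) (X : ι → ℝ) (t : ℝ) : Set (ι → ℝ) :=
  {m | (m - X) ⬝ᵥ M⁻¹ *ᵥ (m - X) ≤ t ^ 2}

noncomputable def ellipsoidLowerSupport (M : Matrix ι ι ℝ) (X : ι → ℝ) (t : ℝ) (w : ι → ℝ) : ℝ :=
  w ⬝ᵥ X - t * √(w ⬝ᵥ M *ᵥ w)

noncomputable def ellipsoidArgmin (M : Matrix ι ι ℝ) (X : ι → ℝ) (t : ℝ) (w : ι → ℝ) : ι → ℝ :=
  X - (t / √(w ⬝ᵥ M *ᵥ w)) • (M *ᵥ w)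

variable {M : Matrix ι ι ℝ} {X w : ι → ℝ} {t : ℝ}

theorem ellipsoidLowerSupport_le_dotProduct [DecidableEq ι] (hM : M.PosDef) (ht : 0 ≤ t)
    {m : ι → ℝ} (hm : m ∈ ellipsoid M X t) (w : ι → ℝ) :
    ellipsoidLowerSupport M X t w ≤ w ⬝ᵥ m := by
  have hq : 0 ≤ w ⬝ᵥ M *ᵥ w := by simpa using hM.posSemidef.dotProduct_mulVec_nonneg w
  have hcs : (w ⬝ᵥ (m - X)) ^ 2 ≤ (t * √(w ⬝ᵥ M *ᵥ w)) ^ 2 :=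
    calc _ ≤ (w ⬝ᵥ M *ᵥ w) * ((m - X) ⬝ᵥ M⁻¹ *ᵥ (m - X)) := hM.sq_dotProduct_le w (m - X)
      _ ≤ (w ⬝ᵥ M *ᵥ w) * t ^ 2 := mul_le_mul_of_nonneg_left hm hq
      _ = _ := by rw [mul_pow, Real.sq_sqrt hq, mul_comm]
  have hlower := (abs_le_of_sq_le_sq' hcs (by positivity)).1
  rw [dotProduct_sub] at hlower
  rw [ellipsoidLowerSupport]
  linarith

theorem ellipsoidArgmin_mem_ellipsoid [DecidableEq ι] (hM : IsUnit M.det)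
    (hw : 0 < w ⬝ᵥ M *ᵥ w) : ellipsoidArgmin M X t w ∈ ellipsoid M X t := by
  simp only [ellipsoid, Set.mem_ofPred_eq, ellipsoidArgmin, sub_sub_cancel_left, neg_dotProduct,
    mulVec_neg, dotProduct_neg, smul_dotProduct, mulVec_smul, dotProduct_smul, mulVec_mulVec,
    nonsing_inv_mul _ hM, one_mulVec, dotProduct_comm (M *ᵥ w) w, smul_eq_mul]
  have hs0 := (Real.sqrt_pos.mpr hw).ne'
  have hs := Real.sq_sqrt hw.le
  set s := √(w ⬝ᵥ M *ᵥ w)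
  rw [← hs]
  field_simp
  exact le_rfl

theorem dotProduct_ellipsoidArgmin (hw : 0 ≤ w ⬝ᵥ M *ᵥ w) :
    w ⬝ᵥ ellipsoidArgmin M X t w = ellipsoidLowerSupport M X t w := by
  simp only [ellipsoidArgmin, ellipsoidLowerSupport, dotProduct_sub, dotProduct_smul, smul_eq_mul]
  have hs := Real.sq_sqrt hw
  set s := √(w ⬝ᵥ M *ᵥ w)
  rw [← hs]
  rcases eq_or_ne s 0 with h | h
  · simp [h]
  · field_simp

theorem hasDerivAt_ellipsoidLowerSupport_add_smul (hM : M.IsSymm) (hw : 0 < w ⬝ᵥ M *ᵥ w)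
    (d : ι → ℝ) :
    HasDerivAt (fun ε : ℝ => ellipsoidLowerSupport M X t (w + ε • d))
      (d ⬝ᵥ ellipsoidArgmin M X t w) 0 := by
  have hexpand : (fun ε : ℝ => ellipsoidLowerSupport M X t (w + ε • d)) = fun ε =>
      w ⬝ᵥ X + ε * (d ⬝ᵥ X)
        - t * √(w ⬝ᵥ M *ᵥ w + 2 * ε * (d ⬝ᵥ M *ᵥ w) + ε ^ 2 * (d ⬝ᵥ M *ᵥ d)) := by
    funext ε
    rw [ellipsoidLowerSupport, hM.add_smul_dotProduct_mulVec_add_smul, add_dotProduct,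
      smul_dotProduct, smul_eq_mul]
  have hquad : HasDerivAt
      (fun ε : ℝ => w ⬝ᵥ M *ᵥ w + 2 * ε * (d ⬝ᵥ M *ᵥ w) + ε ^ 2 * (d ⬝ᵥ M *ᵥ d))
      (2 * (d ⬝ᵥ M *ᵥ w)) 0 := by
    have h := (((hasDerivAt_id (0 : ℝ)).const_mul (2 * (d ⬝ᵥ M *ᵥ w))).add
      (((hasDerivAt_id (0 : ℝ)).pow 2).mul_const (d ⬝ᵥ M *ᵥ d))).const_add (w ⬝ᵥ M *ᵥ w)
    refine (h.congr_deriv (by simp)).congr_of_eventuallyEq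
      (Filter.Eventually.of_forall fun ε => ?_)
    simp only [id, Pi.add_apply, Pi.pow_apply]
    ring
  rw [hexpand]
  have h := (((hasDerivAt_id (0 : ℝ)).mul_const (d ⬝ᵥ X)).const_add (w ⬝ᵥ X)).sub
    ((hquad.sqrt (by simpa using hw.ne')).const_mul t)
  refine h.congr_deriv ?_
  simp only [ellipsoidArgmin, dotProduct_sub, dotProduct_smul, smul_eq_mul, one_mul, mul_zero,
    zero_mul, add_zero, ne_eq, OfNat.ofNat_ne_zero, not_false_eq_true, zero_pow, sub_right_inj]
  field_simp

theorem ellipsoidArgmin_le_dotProduct_of_isMaxOn (hM : M.IsSymm)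
    (hmax : IsMaxOn (ellipsoidLowerSupport M X t) (stdSimplex ℝ ι) w)
    (hwS : w ∈ stdSimplex ℝ ι) (hw : 0 < w ⬝ᵥ M *ᵥ w) (j : ι) :
    ellipsoidArgmin M X t w j ≤ w ⬝ᵥ ellipsoidArgmin M X t w := by
  classical
  have hline : IsLocalMaxOn
      (fun ε : ℝ => ellipsoidLowerSupport M X t (w + ε • (Pi.single j 1 - w))) (Set.Icc 0 1) 0 := by
    refine IsMaxOn.localize fun ε hε => ?_
    simpa using hmax ((convex_stdSimplex ℝ ι).add_smul_sub_mem hwS (single_mem_stdSimplex ℝ j) hε)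
  have hslope := hline.hasFDerivWithinAt_nonpos
    (hasDerivAt_ellipsoidLowerSupport_add_smul hM hw _).hasFDerivAt.hasFDerivWithinAt
    (y := 1) (mem_posTangentConeAt_of_segment_subset (by simp [segment_eq_Icc]))
  simp only [sub_dotProduct, single_dotProduct, one_mul, ContinuousLinearMap.toSpanSingleton_apply,
    smul_eq_mul, sub_nonpos] at hslope
  exact hslope

theorem sup'_ellipsoidArgmin [Nonempty ι] (hM : M.IsSymm)
    (hmax : IsMaxOn (ellipsoidLowerSupport M X t) (stdSimplex ℝ ι) w)
    (hwS : w ∈ stdSimplex ℝ ι) (hw : 0 < w ⬝ᵥ M *ᵥ w) :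
    univ.sup' univ_nonempty (ellipsoidArgmin M X t w) = ellipsoidLowerSupport M X t w := by
  rw [← dotProduct_ellipsoidArgmin hw.le]
  exact le_antisymm
    (sup'_le _ _ fun j _ => ellipsoidArgmin_le_dotProduct_of_isMaxOn hM hmax hwS hw j)
    (dotProduct_le_sup'_of_mem_stdSimplex hwS _)

theorem exists_isMaxOn_ellipsoidLowerSupport [Nonempty ι] (M : Matrix ι ι ℝ) (X : ι → ℝ)
    (t : ℝ) : ∃ w ∈ stdSimplex ℝ ι, IsMaxOn (ellipsoidLowerSupport M X t) (stdSimplex ℝ ι) w := by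
  classical
  exact (isCompact_stdSimplex ℝ ι).exists_isMaxOn
    ⟨_, single_mem_stdSimplex ℝ (Classical.arbitrary ι)⟩
    (by unfold ellipsoidLowerSupport; fun_prop)

/-- Simplex representation of the profile lower bound: the minimum of the max
coordinate over the Mahalanobis ellipsoid equals the maximum over the
probability simplex of `wᵀX̄ - √(c/n)·√(wᵀΣ̂w)`. -/
theorem stmt13 (J : ℕ) [NeZero J] (Sig : Matrix (Fin J) (Fin J) ℝ)
    (hSig : Sig.PosDef) (Xbar : Fin J → ℝ) (c n : ℝ) (hc : 0 ≤ c) (hn : 0 < n) :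
    sInf {x : ℝ | ∃ m : Fin J → ℝ,
        n * ((m - Xbar) ⬝ᵥ Sig⁻¹.mulVec (m - Xbar)) ≤ c ∧
        x = Finset.univ.sup' Finset.univ_nonempty m}
      = sSup {y : ℝ | ∃ w : Fin J → ℝ, (∀ j, 0 ≤ w j) ∧ (∑ j, w j = 1) ∧
          y = w ⬝ᵥ Xbar - Real.sqrt (c / n) * Real.sqrt (w ⬝ᵥ Sig.mulVec w)} := by
  set t := √(c / n) with ht
  have hmem (m : Fin J → ℝ) :
      n * ((m - Xbar) ⬝ᵥ Sig⁻¹ *ᵥ (m - Xbar)) ≤ c ↔ m ∈ ellipsoid Sig Xbar t := by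
    rw [ellipsoid, Set.mem_ofPred_eq, ht, Real.sq_sqrt (div_nonneg hc hn.le), le_div_iff₀ hn,
      mul_comm]
  obtain ⟨w, hwS, hmax⟩ := exists_isMaxOn_ellipsoidLowerSupport Sig Xbar t
  have hw : 0 < w ⬝ᵥ Sig *ᵥ w := by
    simpa using hSig.dotProduct_mulVec_pos (ne_zero_of_mem_stdSimplex hwS)
  have hSymm : Sig.IsSymm := isHermitian_iff_isSymm.mp hSig.1
  rw [IsLeast.csInf_eq (a := ellipsoidLowerSupport Sig Xbar t w),
    IsGreatest.csSup_eq (a := ellipsoidLowerSupport Sig Xbar t w)]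
  · exact ⟨⟨w, hwS.1, hwS.2, rfl⟩, by rintro _ ⟨w', h0, h1, rfl⟩; exact hmax ⟨h0, h1⟩⟩
  · refine ⟨⟨ellipsoidArgmin Sig Xbar t w,
      (hmem _).2 (ellipsoidArgmin_mem_ellipsoid ((isUnit_iff_isUnit_det _).mp hSig.isUnit) hw),
      (sup'_ellipsoidArgmin hSymm hmax hwS hw).symm⟩, ?_⟩
    rintro _ ⟨m, hm, rfl⟩
    exact (ellipsoidLowerSupport_le_dotProduct hSig (Real.sqrt_nonneg _) ((hmem m).1 hm) w).trans
      (dotProduct_le_sup'_of_mem_stdSimplex hwS m)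
end
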